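/- arXiv:2003.12813 — 2 statements merged into one kernel-verified Lean document; each statement's English description precedes it below -/
import Mathlib

section
/- Fix a real α > 0 and an integer k ≥ 2, and define f(s) = α^s · C(k-s-1, s-1) for integers 1 ≤ s ≤ k/2. Then f attains its maximum at s* = ⌈r₁⌉, where r₁ = k/2 - (2α+1+√Δ)/(8α+2) with Δ = (4α+1)k(k-2) + (2α+1)². -/
/-!
Since `f (s + 1) * (s * (k - s - 1)) = f s * (α * (k - 2 * s) * (k - 2 * s - 1))`, `f` increases
at `s` exactly when `q s = α (k - 2s) (k - 2s - 1) - s (k - s - 1)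
= (4α+1) s² - ((4α+1) k - (2α+1)) s + α k (k - 1)` is nonnegative. This quadratic has
discriminant `Δ` and smaller root `r₁`; it is nonnegative left of `r₁` and nonpositive between
`r₁` and its vertex, which lies to the right of `k/2 - 1`. So `f` increases up to `⌈r₁⌉` and
decreases after it.
-/

open Set

theorem isMaxOn_Icc_of_le_succ_of_succ_le {β : Type*} [Preorder β] {f : ℕ → β} {a b t : ℕ}
    (hup : ∀ n, a ≤ n → n < t → f n ≤ f (n + 1))
    (hdown : ∀ n, t ≤ n → n < b → f (n + 1) ≤ f n) :
    IsMaxOn f (Icc a b) t := by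
  rintro s ⟨has, hsb⟩
  rcases le_total s t with hst | hts
  · refine monotoneOn_of_le_succ ordConnected_Icc (s := Icc a t) ?_ ⟨has, hst⟩
      ⟨has.trans hst, le_rfl⟩ hst
    rintro n - ⟨han, -⟩ ⟨-, hnt⟩
    rw [Order.succ_eq_add_one] at *
    exact hup n han hnt
  · refine antitoneOn_of_succ_le ordConnected_Icc (s := Icc t b) ?_ ⟨le_rfl, hts.trans hsb⟩
      ⟨hts, hsb⟩ hts
    rintro n - ⟨htn, -⟩ ⟨-, hnb⟩
    rw [Order.succ_eq_add_one] at *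
    exact hdown n htn hnb

theorem quadratic_nonneg_of_le_root {a b c x : ℝ} (ha : 0 < a)
    (hx : x ≤ (-b - √(discrim a b c)) / (2 * a)) : 0 ≤ a * (x * x) + b * x + c := by
  rw [le_div_iff₀ (by positivity)] at hx
  have hsq : discrim a b c ≤ (-(2 * a * x + b)) ^ 2 :=
    (Real.sqrt_le_iff.mp (by linarith : √(discrim a b c) ≤ -(2 * a * x + b))).2
  unfold discrim at hsq
  nlinarith

theorem quadratic_nonpos_of_root_le {a b c x : ℝ} (ha : 0 < a) (hD : 0 ≤ discrim a b c)
    (hx₁ : (-b - √(discrim a b c)) / (2 * a) ≤ x) (hx₂ : x ≤ -b / (2 * a)) :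
    a * (x * x) + b * x + c ≤ 0 := by
  rw [div_le_iff₀ (by positivity)] at hx₁
  rw [le_div_iff₀ (by positivity)] at hx₂
  have hsq : (2 * a * x + b) ^ 2 ≤ discrim a b c := by
    rw [← Real.sq_sqrt hD]
    exact sq_le_sq' (by linarith) (by linarith [Real.sqrt_nonneg (discrim a b c)])
  unfold discrim at hsq
  nlinarith

theorem Nat.choose_succ_mul_succ_mul (n m : ℕ) :
    n.choose (m + 1) * (m + 1) * (n + 1) = (n + 1).choose m * (n + 1 - m) * (n - m) := by
  rw [mul_right_comm, Nat.choose_mul_succ_eq, mul_right_comm, Nat.choose_succ_right_eq,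
    Nat.add_sub_add_right]

def chooseWeight (α : ℝ) (k s : ℕ) : ℝ := α ^ s * ((k - s - 1).choose (s - 1) : ℝ)

noncomputable def smallRoot (α : ℝ) (k : ℕ) : ℝ :=
  k / 2 - (2 * α + 1 + √((4 * α + 1) * k * (k - 2) + (2 * α + 1) ^ 2)) / (8 * α + 2)

section

variable {α : ℝ} {k s : ℕ}

theorem chooseWeight_pos (hα : 0 < α) (hs : 1 ≤ s) (hsk : 2 * s ≤ k) :
    0 < chooseWeight α k s :=
  mul_pos (pow_pos hα s) (Nat.cast_pos.mpr (Nat.choose_pos (by omega)))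

theorem chooseWeight_succ_mul (hs : 1 ≤ s) (hsk : 2 * s + 2 ≤ k) :
    chooseWeight α k (s + 1) * (s * (k - s - 1)) =
      chooseWeight α k s * (α * (k - 2 * s) * (k - 2 * s - 1)) := by
  obtain ⟨m, rfl⟩ := Nat.exists_eq_add_of_le' hs
  obtain ⟨d, rfl⟩ : ∃ d, k = 2 * m + d + 4 := ⟨k - 2 * m - 4, by omega⟩
  have h := Nat.choose_succ_mul_succ_mul (m + d + 1) m
  rw [show m + d + 1 + 1 - m = d + 2 by omega, show m + d + 1 - m = d + 1 by omega] at h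
  have hR := congrArg (Nat.cast : ℕ → ℝ) h
  push_cast at hR
  simp only [chooseWeight, show 2 * m + d + 4 - (m + 1 + 1) - 1 = m + d + 1 by omega,
    show 2 * m + d + 4 - (m + 1) - 1 = m + d + 1 + 1 by omega, Nat.add_sub_cancel]
  push_cast
  linear_combination α ^ (m + 2) * hR

theorem natCast_mul_sub_sub_one_pos (hs : 1 ≤ s) (hsk : s + 2 ≤ k) :
    (0 : ℝ) < s * (k - s - 1) := by
  have : (s + 2 : ℝ) ≤ k := by exact_mod_cast hsk
  have : (1 : ℝ) ≤ s := by exact_mod_cast hs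
  exact mul_pos (by linarith) (by linarith)

theorem chooseWeight_le_succ_iff (hα : 0 < α) (hs : 1 ≤ s) (hsk : 2 * s + 2 ≤ k) :
    chooseWeight α k s ≤ chooseWeight α k (s + 1) ↔
      s * (k - s - 1) ≤ α * (k - 2 * s) * (k - 2 * s - 1) := by
  rw [← mul_le_mul_iff_of_pos_right (natCast_mul_sub_sub_one_pos (k := k) hs (by omega)),
    chooseWeight_succ_mul hs hsk,
    mul_le_mul_iff_right₀ (chooseWeight_pos hα hs (by omega))]

theorem chooseWeight_succ_le_iff (hα : 0 < α) (hs : 1 ≤ s) (hsk : 2 * s + 2 ≤ k) :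
    chooseWeight α k (s + 1) ≤ chooseWeight α k s ↔
      α * (k - 2 * s) * (k - 2 * s - 1) ≤ s * (k - s - 1) := by
  rw [← mul_le_mul_iff_of_pos_right (natCast_mul_sub_sub_one_pos (k := k) hs (by omega)),
    chooseWeight_succ_mul hs hsk,
    mul_le_mul_iff_right₀ (chooseWeight_pos hα hs (by omega))]

theorem discrim_chooseWeight_ratio :
    discrim (4 * α + 1) (-((4 * α + 1) * k - (2 * α + 1))) (α * k * (k - 1)) =
      (4 * α + 1) * k * (k - 2) + (2 * α + 1) ^ 2 := by
  rw [discrim]; ring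

theorem smallRoot_eq (hα : 0 < α) :
    smallRoot α k = (-(-((4 * α + 1) * k - (2 * α + 1))) -
      √(discrim (4 * α + 1) (-((4 * α + 1) * k - (2 * α + 1))) (α * k * (k - 1)))) /
        (2 * (4 * α + 1)) := by
  rw [discrim_chooseWeight_ratio, smallRoot]
  field_simp
  ring

theorem smallRoot_pos (hα : 0 < α) (hk : 2 ≤ k) : 0 < smallRoot α k := by
  have hk' : (2 : ℝ) ≤ k := by exact_mod_cast hk
  have hc : 0 < α * k * (k - 1) := mul_pos (by positivity) (by linarith)
  have : √((4 * α + 1) * k * (k - 2) + (2 * α + 1) ^ 2) < (4 * α + 1) * k - (2 * α + 1) := by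
    rw [Real.sqrt_lt' (by nlinarith)]
    nlinarith
  rw [smallRoot, sub_pos, div_lt_iff₀ (by linarith)]
  linarith

theorem smallRoot_le_sub_one_div_two (hα : 0 < α) : smallRoot α k ≤ (k - 1) / 2 := by
  -- the radicand is `(4α+1)(k-1)² + 4α²`
  have : 2 * α ≤ √((4 * α + 1) * k * (k - 2) + (2 * α + 1) ^ 2) :=
    Real.le_sqrt_of_sq_le (by nlinarith [sq_nonneg ((k : ℝ) - 1)])
  rw [smallRoot, sub_le_comm, sub_div' (by norm_num), le_div_iff₀ (by linarith)]
  linarith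

theorem chooseWeight_le_succ_of_le_smallRoot (hα : 0 < α) (hs : 1 ≤ s) (hsk : 2 * s + 2 ≤ k)
    (hsr : s ≤ smallRoot α k) : chooseWeight α k s ≤ chooseWeight α k (s + 1) := by
  rw [smallRoot_eq hα] at hsr
  have := quadratic_nonneg_of_le_root (by linarith) hsr
  rw [chooseWeight_le_succ_iff hα hs hsk]
  linear_combination this

theorem chooseWeight_succ_le_of_smallRoot_le (hα : 0 < α) (hs : 1 ≤ s) (hsk : 2 * s + 2 ≤ k)
    (hsr : smallRoot α k ≤ s) : chooseWeight α k (s + 1) ≤ chooseWeight α k s := by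
  rw [smallRoot_eq hα] at hsr
  have hD : 0 ≤ discrim (4 * α + 1) (-((4 * α + 1) * k - (2 * α + 1))) (α * k * (k - 1)) := by
    rw [discrim_chooseWeight_ratio]
    nlinarith [sq_nonneg ((k : ℝ) - 1)]
  have hmid : (s : ℝ) ≤ -(-((4 * α + 1) * k - (2 * α + 1))) / (2 * (4 * α + 1)) := by
    have : (2 * s + 2 : ℝ) ≤ k := by exact_mod_cast hsk
    rw [le_div_iff₀ (by linarith)]
    nlinarith
  have := quadratic_nonpos_of_root_le (by linarith) hD hsr hmid
  rw [chooseWeight_succ_le_iff hα hs hsk]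
  linear_combination this

end

/-- For real `α > 0` and integer `k ≥ 2`, the function
`f(s) = α^s · C(k-s-1, s-1)` on integers `1 ≤ s ≤ k/2` attains its maximum at
`s* = ⌈r₁⌉`, where `r₁ = k/2 - (2α+1+√Δ)/(8α+2)` and
`Δ = (4α+1)k(k-2) + (2α+1)²`. -/
theorem max_at_ceil_root (α : ℝ) (hα : 0 < α) (k : ℕ) (hk : 2 ≤ k)
    (Δ r₁ : ℝ)
    (hΔ : Δ = (4 * α + 1) * (k : ℝ) * ((k : ℝ) - 2) + (2 * α + 1) ^ 2)
    (hr₁ : r₁ = (k : ℝ) / 2 - (2 * α + 1 + Real.sqrt Δ) / (8 * α + 2))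
    (f : ℕ → ℝ)
    (hf : ∀ s : ℕ, f s = α ^ s * ((k - s - 1).choose (s - 1) : ℝ)) :
    1 ≤ (⌈r₁⌉ : ℤ).toNat ∧ 2 * (⌈r₁⌉ : ℤ).toNat ≤ k ∧
      ∀ s : ℕ, 1 ≤ s → 2 * s ≤ k → f s ≤ f (⌈r₁⌉ : ℤ).toNat := by
  obtain rfl : r₁ = smallRoot α k := by rw [hr₁, hΔ, smallRoot]
  obtain rfl : f = chooseWeight α k := funext hf
  have hpos := smallRoot_pos hα hk
  rw [Int.ceil_toNat]
  set t := ⌈smallRoot α k⌉₊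
  have ht : 1 ≤ t := Nat.one_le_iff_ne_zero.mpr (Nat.ceil_pos.mpr hpos).ne'
  have htk : 2 * t ≤ k := by
    have : (t : ℝ) < smallRoot α k + 1 := Nat.ceil_lt_add_one hpos.le
    have : (2 * t : ℝ) < k + 1 := by linarith [smallRoot_le_sub_one_div_two (k := k) hα]
    exact Nat.lt_succ_iff.mp (by exact_mod_cast this)
  refine ⟨ht, htk, fun s hs hsk ↦ ?_⟩
  refine isMaxOn_Icc_of_le_succ_of_succ_le (f := chooseWeight α k) (a := 1) (b := k / 2)
    (fun n hn hnt ↦ ?_) (fun n htn hnk ↦ ?_) ⟨hs, by omega⟩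
  · exact chooseWeight_le_succ_of_le_smallRoot hα hn (by omega) (Nat.lt_ceil.mp hnt).le
  · exact chooseWeight_succ_le_of_smallRoot_le hα (ht.trans htn) (by omega) (Nat.ceil_le.mp htn)
end

section
/- In constrained-degree percolation on the d-ary tree with d ≥ 3, the probability that a given edge e of the random binary subtree T is 'red' is strictly greater than 1/2, where P(e red) = (1/2)·d·[1/(2d) + d(2d-2)!/(2d)! + d(d-1)(2d-3)!/(2d)!] + (1/2)·d·[(d-1)(2d-2)!/(2d)! + 2d(d-1)(2d-3)!/(2d)! + 3d(d-1)²(2d-4)!/(2d)!]. Prove that for every integer d ≥ 2, d·[1/(2d) + d(2d-2)!/(2d)! + d(d-1)(2d-3)!/(2d)!]/2 + d·[(d-1)(2d-2)!/(2d)! + 2d(d-1)(2d-3)!/(2d)! + 3d(d-1)²(2d-4)!/(2d)!]/2 > 1/2. -/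
/-!
Writing `(2d - k)! / (2d)!` as the reciprocal of the falling factorial `2d (2d - 1) ⋯ (2d - k + 1)`,
the two halves of the red-edge probability collapse to
`1/4 + 3d / (8 (2d - 1))` and `1/4 + 3d (d - 1) / (8 (2d - 1) (2d - 3))`.
Both corrections are positive for `d ≥ 2`, so the sum exceeds `1/2`.
-/

open Finset

theorem cast_factorial_sub_div_factorial {n k : ℕ} (h : k ≤ n) :
    ((n - k).factorial : ℝ) / n.factorial = (∏ i ∈ range k, ((n : ℝ) - i))⁻¹ := by
  have hprod : (n.descFactorial k : ℝ) = ∏ i ∈ range k, ((n : ℝ) - i) := by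
    rw [Nat.descFactorial_eq_prod_range, Nat.cast_prod]
    exact prod_congr rfl fun i hi => Nat.cast_sub (by simp at hi; omega)
  rw [← hprod, ← Nat.factorial_mul_descFactorial h, Nat.cast_mul,
    div_mul_cancel_left₀ (by positivity)]

section

variable {d : ℕ} (hd : 2 ≤ d)
include hd

theorem red_prob_first_half_eq :
    (d : ℝ) * (1 / (2 * (d : ℝ))
        + (d : ℝ) * (Nat.factorial (2 * d - 2) : ℝ) / (Nat.factorial (2 * d) : ℝ)
        + (d : ℝ) * ((d : ℝ) - 1) * (Nat.factorial (2 * d - 3) : ℝ)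
            / (Nat.factorial (2 * d) : ℝ)) / 2
      = 1 / 4 + 3 * d / (8 * (2 * d - 1)) := by
  have hd' : (2 : ℝ) ≤ d := by exact_mod_cast hd
  simp only [mul_div_assoc, cast_factorial_sub_div_factorial (by omega : 2 ≤ 2 * d),
    cast_factorial_sub_div_factorial (by omega : 3 ≤ 2 * d), prod_range_succ, prod_range_zero,
    one_mul, Nat.cast_mul, Nat.cast_zero, Nat.cast_one, Nat.cast_ofNat, sub_zero]
  have : (d - 1 : ℝ) ≠ 0 := by linarith
  field_simp
  ring

theorem red_prob_second_half_eq :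
    (d : ℝ) * (((d : ℝ) - 1) * (Nat.factorial (2 * d - 2) : ℝ)
            / (Nat.factorial (2 * d) : ℝ)
        + 2 * (d : ℝ) * ((d : ℝ) - 1) * (Nat.factorial (2 * d - 3) : ℝ)
            / (Nat.factorial (2 * d) : ℝ)
        + 3 * (d : ℝ) * ((d : ℝ) - 1) ^ 2 * (Nat.factorial (2 * d - 4) : ℝ)
            / (Nat.factorial (2 * d) : ℝ)) / 2
      = 1 / 4 + 3 * d * (d - 1) / (8 * (2 * d - 1) * (2 * d - 3)) := by
  have hd' : (2 : ℝ) ≤ d := by exact_mod_cast hd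
  simp only [mul_div_assoc, cast_factorial_sub_div_factorial (by omega : 2 ≤ 2 * d),
    cast_factorial_sub_div_factorial (by omega : 3 ≤ 2 * d),
    cast_factorial_sub_div_factorial (by omega : 4 ≤ 2 * d), prod_range_succ, prod_range_zero,
    one_mul, Nat.cast_mul, Nat.cast_zero, Nat.cast_one, Nat.cast_ofNat, sub_zero]
  have : (d - 1 : ℝ) ≠ 0 := by linarith
  -- `field_simp` rewrites these denominators into this orientation before clearing them.
  have : (d * 2 - 1 : ℝ) ≠ 0 := by linarith
  have : (d * 2 - 3 : ℝ) ≠ 0 := by linarith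
  field_simp
  ring

end

/-- The red-edge probability on the `d`-ary tree is strictly larger than `1/2`:
for every integer `d ≥ 2`,
`d·[1/(2d) + d(2d-2)!/(2d)! + d(d-1)(2d-3)!/(2d)!]/2
 + d·[(d-1)(2d-2)!/(2d)! + 2d(d-1)(2d-3)!/(2d)! + 3d(d-1)²(2d-4)!/(2d)!]/2 > 1/2`. -/
theorem red_edge_prob_gt_half (d : ℕ) (hd : 2 ≤ d) :
    (d : ℝ) * (1 / (2 * (d : ℝ))
        + (d : ℝ) * (Nat.factorial (2 * d - 2) : ℝ) / (Nat.factorial (2 * d) : ℝ)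
        + (d : ℝ) * ((d : ℝ) - 1) * (Nat.factorial (2 * d - 3) : ℝ)
            / (Nat.factorial (2 * d) : ℝ)) / 2
      + (d : ℝ) * (((d : ℝ) - 1) * (Nat.factorial (2 * d - 2) : ℝ)
            / (Nat.factorial (2 * d) : ℝ)
        + 2 * (d : ℝ) * ((d : ℝ) - 1) * (Nat.factorial (2 * d - 3) : ℝ)
            / (Nat.factorial (2 * d) : ℝ)
        + 3 * (d : ℝ) * ((d : ℝ) - 1) ^ 2 * (Nat.factorial (2 * d - 4) : ℝ)
            / (Nat.factorial (2 * d) : ℝ)) / 2 > 1 / 2 := by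
  rw [red_prob_first_half_eq hd, red_prob_second_half_eq hd]
  have hd' : (2 : ℝ) ≤ d := by exact_mod_cast hd
  have hfirst : 0 < 3 * d / (8 * (2 * d - 1) : ℝ) := by
    apply div_pos <;> linarith
  have hsecond : 0 < 3 * d * (d - 1) / (8 * (2 * d - 1) * (2 * d - 3) : ℝ) := by
    apply div_pos
    · nlinarith
    · nlinarith
  linarith
end
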